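/- L² boundedness of cancellative dyadic shifts: If an n-parameter dyadic shift is cancellative (all Haar functions appearing in its defining sum are cancellative) and its coefficients satisfy |a_{I₁J₁K₁…IₙJₙKₙ}| ≤ √(|I₁||J₁|⋯|Iₙ||Jₙ|)/(|K₁|⋯|Kₙ|), then it is bounded on L²(ℝ^{d⃗}) with norm ≲ 1. -/

import Mathlib

open MeasureTheory Finset
open scoped ENNReal Classical

noncomputable section

namespace MPSIO

/-! ### Points and test functions on a product space `ℝ^{d i}` indexed by `ι` -/

/-- A point of `∏_{i : ι} ℝ^{d i}`. -/
abbrev Pt {ι : Type} (d : ι → ℕ) : Type := ∀ i : ι, Fin (d i) → ℝ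

/-- A tuple of functions, one on each factor `ℝ^{d i}`. -/
abbrev FactorFn {ι : Type} (d : ι → ℕ) : Type := ∀ i : ι, (Fin (d i) → ℝ) → ℝ

variable {ι : Type} [Fintype ι] [DecidableEq ι]

/-- The tensor product `⊗ᵢ fᵢ` of a tuple of factor functions. -/
def tensor {d : ι → ℕ} (f : FactorFn d) : Pt d → ℝ := fun x => ∏ i, f i (x i)

/-- The constant function `1` on `ℝ^k`. -/
def one (k : ℕ) : (Fin k → ℝ) → ℝ := fun _ => 1

/-- A `C_0^∞` function. -/
def IsTest {k : ℕ} (φ : (Fin k → ℝ) → ℝ) : Prop :=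
  ContDiff ℝ (⊤ : ℕ∞) φ ∧ HasCompactSupport φ

/-- A tuple of `C_0^∞` factor functions. -/
def IsTestTuple {d : ι → ℕ} (f : FactorFn d) : Prop := ∀ i, IsTest (f i)

/-- A tuple of factor functions which are `C_0^∞` in the variables of `S` and
constant `1` in the remaining variables. -/
def IsTestTupleOn {d : ι → ℕ} (S : Finset ι) (f : FactorFn d) : Prop :=
  (∀ i ∈ S, IsTest (f i)) ∧ ∀ i ∉ S, f i = one (d i)

/-! ### Mixed size–Hölder conditions -/

/-- The mixed size–Hölder conditions for a kernel `K` with Hölder exponent `δ` and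
constant `C`: for every subset `W` of the variables, whenever `|xᵢ - x'ᵢ| ≤ |xᵢ - yᵢ|/2`
for every `i ∈ W`, the alternating sum over `Λ ⊆ W` of `K` evaluated at `x'ᵢ` for `i ∈ Λ`
(and `xᵢ` otherwise) is dominated by the Hölder factors in the `W`-variables and the
size factors in the remaining variables. -/
def MixedSH {d : ι → ℕ} (δ C : ℝ) (K : Pt d → Pt d → ℝ) : Prop :=
  ∀ (W : Finset ι) (x x' y : Pt d), (∀ i, x i ≠ y i) →
    (∀ i ∈ W, ‖x i - x' i‖ ≤ ‖x i - y i‖ / 2) →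
    |∑ L ∈ W.powerset, (-1 : ℝ) ^ L.card * K (fun i => if i ∈ L then x' i else x i) y|
      ≤ C * (∏ i ∈ W, ‖x i - x' i‖ ^ δ / ‖x i - y i‖ ^ ((d i : ℝ) + δ))
          * ∏ i ∈ Wᶜ, (‖x i - y i‖ ^ (d i : ℝ))⁻¹

/-! ### Bilinear forms and partial adjoints -/

/-- A bilinear-form realization of an operator: `Λ f g = ⟨T f, g⟩`. -/
abbrev Form {ι : Type} (d : ι → ℕ) : Type := (Pt d → ℝ) → (Pt d → ℝ) → ℝ

/-- A family indexed by `S : Finset ι`, intended as the partial adjoints `T_S`. -/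
abbrev OpFam {ι : Type} (d : ι → ℕ) : Type := Finset ι → Form d

/-- Compatibility of a family of forms with the partial-adjoint identities:
`⟨T_U(g_U ⊗ f_{U^c}), f_U ⊗ g_{U^c}⟩ = ⟨T(f), g⟩` on tensor products of test functions
(in the variables of `S`, constant `1` elsewhere), for every `U ⊆ S`. -/
def AdjCompatOn {d : ι → ℕ} (S : Finset ι) (Λ : OpFam d) : Prop :=
  ∀ U ⊆ S, ∀ f g : FactorFn d, IsTestTupleOn S f → IsTestTupleOn S g →
    Λ U (tensor fun i => if i ∈ U then g i else f i)
        (tensor fun i => if i ∈ U then f i else g i)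
      = Λ ∅ (tensor f) (tensor g)


/-! ### Cubes, shifted dyadic grids and Haar functions -/

/-- An (axis-parallel, half-open) cube in `ℝ^k` with corner `c` and side length `l`. -/
structure Cube (k : ℕ) where
  c : Fin k → ℝ
  l : ℝ

namespace Cube

def carrier {k : ℕ} (Q : Cube k) : Set (Fin k → ℝ) :=
  {x | ∀ t, Q.c t ≤ x t ∧ x t < Q.c t + Q.l}

/-- The indicator function `χ_Q`. -/
def ind {k : ℕ} (Q : Cube k) : (Fin k → ℝ) → ℝ :=
  fun x => if x ∈ Q.carrier then 1 else 0

/-- Volume `|Q| = l^k`. -/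
def vol {k : ℕ} (Q : Cube k) : ℝ := Q.l ^ k

end Cube

/-- The parameter `ω = (ω^j)_{j ∈ ℤ}` of a shifted dyadic grid on `ℝ^k`;
each `ω^j` should have entries in `{0,1}`. -/
abbrev GridParam (k : ℕ) : Type := ℤ → Fin k → ℝ

/-- Validity of a grid parameter: all entries in `{0,1}`. -/
def IsGP {k : ℕ} (ω : GridParam k) : Prop := ∀ j t, ω j t = 0 ∨ ω j t = 1

/-- The standard (unshifted) dyadic grid parameter. -/
def stdGP (k : ℕ) : GridParam k := fun _ _ => 0

/-- The total shift `∑_{j : 2^{-j} < 2^{-s}} 2^{-j} ω^j` at scale `s`. -/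
def gpShift {k : ℕ} (ω : GridParam k) (s : ℤ) (t : Fin k) : ℝ :=
  ∑' j : ℤ, if s < j then (2 : ℝ) ^ (-j) * ω j t else 0

/-- A cube of a (shifted) dyadic grid on `ℝ^k`: scale `s` (side length `2^{-s}`)
and position `m`. Its actual position also depends on the grid parameter `ω`. -/
structure SCube (k : ℕ) where
  s : ℤ
  m : Fin k → ℤ

namespace SCube

/-- Side length `ℓ(I) = 2^{-s}`. -/
def len {k : ℕ} (I : SCube k) : ℝ := (2 : ℝ) ^ (-I.s)

/-- Volume `|I| = ℓ(I)^k`. -/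
def vol {k : ℕ} (I : SCube k) : ℝ := ((2 : ℝ) ^ (-I.s)) ^ k

/-- The corner of `I ∔ ω`. -/
def corner {k : ℕ} (I : SCube k) (ω : GridParam k) (t : Fin k) : ℝ :=
  (I.m t : ℝ) * (2 : ℝ) ^ (-I.s) + gpShift ω I.s t

/-- The set `I ∔ ω ⊆ ℝ^k`. -/
def set {k : ℕ} (I : SCube k) (ω : GridParam k) : Set (Fin k → ℝ) :=
  {x | ∀ t, I.corner ω t ≤ x t ∧ x t < I.corner ω t + I.len}

end SCube

/-- The one-dimensional Haar function on `[a, a+l)`: cancellative (for `e = true`)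
or noncancellative (`e = false`), `L²`-normalized. -/
def haar1 (a l : ℝ) (e : Bool) (u : ℝ) : ℝ :=
  if a ≤ u ∧ u < a + l then
    (if e then (if u < a + l / 2 then 1 else -1) else 1) * (Real.sqrt l)⁻¹
  else 0

/-- The Haar function `h_I^ε` on the grid cube `I ∔ ω` in `ℝ^k`, `ε : Fin k → Bool`.
For `ε ≡ false` this is the noncancellative `|I|^{-1/2} χ_I`. -/
def SCube.haar {k : ℕ} (I : SCube k) (ω : GridParam k) (ε : Fin k → Bool) :
    (Fin k → ℝ) → ℝ :=
  fun x => ∏ t, haar1 (I.corner ω t) I.len (ε t) (x t)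

/-- A Haar signature is cancellative if it has a cancellative coordinate. -/
def Canc {k : ℕ} (ε : Fin k → Bool) : Prop := ∃ t, ε t = true

/-- Distance between two sets. -/
def setDist {α : Type*} [PseudoMetricSpace α] (A B : Set α) : ℝ :=
  sInf (Set.image2 dist A B)

/-- Goodness of a grid cube (with parameters `r` and `γ`): `I` is good if for every grid
cube `J` with `ℓ(J) ≥ 2^r ℓ(I)` one has `d(I, ∂J) > 2 ℓ(I)^γ ℓ(J)^{1-γ}`. -/
def IsGoodCube {k : ℕ} (ω : GridParam k) (r : ℕ) (γ : ℝ) (I : SCube k) : Prop :=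
  ∀ J : SCube k, (2 : ℝ) ^ r * I.len ≤ J.len →
    2 * I.len ^ γ * J.len ^ (1 - γ) < setDist (I.set ω) (frontier (J.set ω))

/-- `Q` is the dyadic child of `big` containing `small` (all in the grid `ω`). -/
def IsChildContaining {k : ℕ} (ω : GridParam k) (Q big small : SCube k) : Prop :=
  Q.s = big.s + 1 ∧ Q.set ω ⊆ big.set ω ∧ small.set ω ⊆ Q.set ω

/-- The auxiliary function `s_{I J} = χ_{Q^c} (h_J^ε - ⟨h_J^ε⟩_Q)`, where `Q` is the
child of `J` containing `I`. -/
def sFn {k : ℕ} (ω : GridParam k) (J Q : SCube k) (ε : Fin k → Bool) :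
    (Fin k → ℝ) → ℝ :=
  fun x => if x ∈ Q.set ω then 0
    else J.haar ω ε x - (Q.vol)⁻¹ * ∫ y in Q.set ω, J.haar ω ε y

/-! ### Product BMO via the product Carleson condition -/

variable {ι : Type} [Fintype ι] [DecidableEq ι]

/-- `Φ`, viewed as the pairings `⟨b, ⊗ᵢ h_{Jᵢ}^{εᵢ}⟩` of a (generalized) function `b` with
cancellative Haar tensors of the product grid `ω`, satisfies the product Carleson
condition with constant `A`; this expresses `‖b‖_{BMO_prod} ≲ A` for the dyadic product
BMO space of the grid `ω`. -/
def ProdCarlesonBound (d : ι → ℕ)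
    (Φ : (∀ i, SCube (d i)) → (∀ i, Fin (d i) → Bool) → ℝ)
    (ω : ∀ i, GridParam (d i)) (A : ℝ) : Prop :=
  ∀ Ω : Set (Pt d), IsOpen Ω → volume Ω ≠ ⊤ →
    ∀ F : Finset ((∀ i, SCube (d i)) × (∀ i, Fin (d i) → Bool)),
      (∀ p ∈ F, (∀ i, Canc (p.2 i)) ∧
        {x : Pt d | ∀ i, x i ∈ (p.1 i).set (ω i)} ⊆ Ω) →
      ∑ p ∈ F, (Φ p.1 p.2) ^ 2 ≤ A ^ 2 * (volume Ω).toReal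


/-! ### The full and partial kernel assumptions -/

variable {ιa : Type} [Fintype ιa] [DecidableEq ιa]

/-- Points of the sub-product indexed by `V`. -/
abbrev PtV (d : ιa → ℕ) (V : Finset ιa) : Type := Pt fun i : {i : ιa // i ∈ V} => d i.1

/-- The full kernel assumption for a bilinear form, with Hölder exponent `δ` and
constant `C`: a kernel representation on tensor products of test functions with
componentwise disjoint supports, with a kernel satisfying the mixed size–Hölder
conditions. -/
def FullKernel {d : ιa → ℕ} (Λf : Form d) (δ C : ℝ) : Prop :=
  ∃ K : Pt d → Pt d → ℝ,
    (∀ f g : FactorFn d, IsTestTuple f → IsTestTuple g →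
      (∀ i, Disjoint (tsupport (f i)) (tsupport (g i))) →
      Λf (tensor f) (tensor g)
        = ∫ x : Pt d, ∫ y : Pt d, K x y * tensor f y * tensor g x) ∧
    MixedSH δ C K

/-- The partial kernel assumption for a bilinear form, with Hölder exponent `δ` and
constant `C`: for every nonempty proper subset `V` of the variables there are partial
kernels `K_{f,g}` (depending on the data in the variables outside `V`) with constants
`Cst f g`, giving a kernel representation in the `V`-variables whenever the supports
are componentwise disjoint there, satisfying the mixed size–Hölder conditions, and whose
constants satisfy the mixed WBP/BMO conditions: testing on indicators of cubes in the
variables of `W ⊆ V^c`, on `1` and on Haar functions elsewhere, yields a product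
Carleson (i.e. product BMO) bound `≲ C ∏_{i ∈ W} |I_i|`, uniformly over all shifted
dyadic grids. -/
def PartialKernel {d : ιa → ℕ} (Λf : Form d) (δ C : ℝ) : Prop :=
  ∀ V : Finset ιa, V.Nonempty → V ≠ Finset.univ →
    ∃ (K : FactorFn d → FactorFn d → PtV d V → PtV d V → ℝ)
      (Cst : FactorFn d → FactorFn d → ℝ),
      (∀ f g : FactorFn d, IsTestTuple f → IsTestTuple g →
        (∀ i ∈ V, Disjoint (tsupport (f i)) (tsupport (g i))) →
        Λf (tensor f) (tensor g)
          = ∫ x : PtV d V, ∫ y : PtV d V,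
              K f g x y * (∏ i : {i : ιa // i ∈ V}, f i.1 (y i))
                * ∏ i : {i : ιa // i ∈ V}, g i.1 (x i)) ∧
      (∀ f g : FactorFn d, MixedSH δ (Cst f g) (K f g)) ∧
      (∀ W : Finset ιa, W ⊆ Vᶜ →
        ∀ I : ∀ i, Cube (d i), (∀ i ∈ W, 0 < (I i).l) →
        ∀ ω : ∀ i : {i : ιa // i ∈ (Vᶜ \ W : Finset ιa)}, GridParam (d i.1),
          (∀ i, IsGP (ω i)) →
          ProdCarlesonBound (fun i : {i : ιa // i ∈ (Vᶜ \ W : Finset ιa)} => d i.1)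
            (fun J ε => Cst
              (fun i => if i ∈ W then (I i).ind else one (d i))
              (fun i => if i ∈ W then (I i).ind
                else if h : i ∈ (Vᶜ \ W : Finset ιa) then
                  (J ⟨i, h⟩).haar (ω ⟨i, h⟩) (ε ⟨i, h⟩)
                else one (d i)))
            ω (C * ∏ i ∈ W, (I i).vol))

/-- `Λ` (the family of all partial adjoints `T_S` of an operator `T = Λ ∅`) is an
`n`-parameter singular integral operator with Hölder exponent `δ` and constant `C`:
every partial adjoint satisfies the full kernel and partial kernel assumptions. -/
def IsSIO {d : ιa → ℕ} (Λ : OpFam d) (δ C : ℝ) : Prop :=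
  AdjCompatOn Finset.univ Λ ∧
    ∀ S : Finset ιa, FullKernel (Λ S) δ C ∧ PartialKernel (Λ S) δ C

/-- The mixed BMO/WBP assumptions with constant `C`: for every partial adjoint `T_S`,
every subset `W` of the variables and all cubes `I_i` (`i ∈ W`),
`‖⟨T_S((⊗_{i∈W} χ_{I_i}) ⊗ (⊗_{i∉W} 1)), (⊗_{i∈W} χ_{I_i}) ⊗ ·⟩‖_{BMO_prod} ≤ C ∏_{i∈W}|I_i|`,
where the product BMO norm in the variables outside `W` is expressed by the product
Carleson condition, uniformly over all shifted dyadic grids. -/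
def BMOWBP {d : ιa → ℕ} (Λ : OpFam d) (C : ℝ) : Prop :=
  ∀ S W : Finset ιa, ∀ I : ∀ i, Cube (d i), (∀ i ∈ W, 0 < (I i).l) →
    ∀ ω : ∀ i : {i : ιa // i ∈ Wᶜ}, GridParam (d i.1), (∀ i, IsGP (ω i)) →
      ProdCarlesonBound (fun i : {i : ιa // i ∈ Wᶜ} => d i.1)
        (fun J ε => Λ S
          (tensor fun i => if i ∈ W then (I i).ind else one (d i))
          (tensor fun i => if h : i ∈ Wᶜ then
              (J ⟨i, h⟩).haar (ω ⟨i, h⟩) (ε ⟨i, h⟩)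
            else (I i).ind))
        ω (C * ∏ i ∈ W, (I i).vol)

/-! ### `L²` boundedness -/

/-- The function on `∏_{i ∈ S} ℝ^{d i}` determined by a finite linear combination
`∑ a, c a • ⊗ᵢ F a i` of tensor products, in the variables of `S`. -/
def comboFnOn {d : ιa → ℕ} (S : Finset ιa) {N : ℕ} (c : Fin N → ℝ)
    (F : Fin N → FactorFn d) : PtV d S → ℝ :=
  fun x => ∑ a, c a * ∏ i : {i : ιa // i ∈ S}, F a i.1 (x i)

/-- `Λf` is bounded on `L²` (of the product of the variables in `S`) with norm `≤ C`,
tested on finite linear combinations of tensor products of test functions in the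
variables of `S` (constant `1` elsewhere). -/
def L2BddOn {d : ιa → ℕ} (S : Finset ιa) (Λf : Form d) (C : ℝ) : Prop :=
  ∀ (N M : ℕ) (c : Fin N → ℝ) (e : Fin M → ℝ)
    (F : Fin N → FactorFn d) (G : Fin M → FactorFn d),
    (∀ a, IsTestTupleOn S (F a)) → (∀ b, IsTestTupleOn S (G b)) →
    |∑ a, ∑ b, c a * e b * Λf (tensor (F a)) (tensor (G b))|
      ≤ C * (eLpNorm (comboFnOn S c F) 2 volume).toReal
          * (eLpNorm (comboFnOn S e G) 2 volume).toReal

/-- `Λ` is an `n`-parameter Calderón–Zygmund operator: it is an `n`-parameter singular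
integral operator and every partial adjoint `T_S` is bounded on `L²`. -/
def IsCZO {d : ιa → ℕ} (Λ : OpFam d) (δ : ℝ) : Prop :=
  (∃ C, 0 ≤ C ∧ IsSIO Λ δ C) ∧
    ∀ S : Finset ιa, ∃ C, 0 ≤ C ∧ L2BddOn Finset.univ (Λ S) C


/-! ### Dyadic shifts -/

/-- The data of an `n`-parameter dyadic shift: coefficients `a_{K I J}` and choices of
Haar signatures for the input and output Haar functions. -/
structure ShiftData (d : ιa → ℕ) where
  a : (∀ i, SCube (d i)) → (∀ i, SCube (d i)) → (∀ i, SCube (d i)) → ℝ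
  εI : (∀ i, SCube (d i)) → (∀ i, SCube (d i)) → (∀ i, SCube (d i)) →
    ∀ i, Fin (d i) → Bool
  εJ : (∀ i, SCube (d i)) → (∀ i, SCube (d i)) → (∀ i, SCube (d i)) →
    ∀ i, Fin (d i) → Bool

namespace ShiftData

/-- The bilinear form `⟨S f, g⟩ = ∑_{K,I,J} a_{KIJ} ⟨f, ⊗ h_{Iᵢ}⟩ ⟨g, ⊗ h_{Jᵢ}⟩` of a
dyadic shift, relative to the grids `ω`. -/
def pairing {d : ιa → ℕ} (D : ShiftData d) (ω : ∀ i, GridParam (d i))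
    (f g : Pt d → ℝ) : ℝ :=
  ∑' q : (∀ i, SCube (d i)) × (∀ i, SCube (d i)) × (∀ i, SCube (d i)),
    D.a q.1 q.2.1 q.2.2
      * (∫ y : Pt d, f y * ∏ i, (q.2.1 i).haar (ω i) (D.εI q.1 q.2.1 q.2.2 i) (y i))
      * (∫ x : Pt d, g x * ∏ i, (q.2.2 i).haar (ω i) (D.εJ q.1 q.2.1 q.2.2 i) (x i))

/-- Admissibility of a dyadic shift with parameters `(i_s, j_s)_{s}`: the coefficients
satisfy `|a_{KIJ}| ≤ ∏ √(|I_s||J_s|)/|K_s|` and vanish unless `I_s, J_s ⊆ K_s` with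
`ℓ(I_s) = 2^{-i_s} ℓ(K_s)` and `ℓ(J_s) = 2^{-j_s} ℓ(K_s)` for every `s`. -/
def Admissible {d : ιa → ℕ} (D : ShiftData d) (ω : ∀ i, GridParam (d i))
    (ij : ιa → ℕ × ℕ) : Prop :=
  (∀ K I J, |D.a K I J| ≤ ∏ i, Real.sqrt ((I i).vol * (J i).vol) / (K i).vol) ∧
  (∀ K I J, D.a K I J ≠ 0 → ∀ i,
    (I i).s = (K i).s + (ij i).1 ∧ (J i).s = (K i).s + (ij i).2 ∧
      (I i).set (ω i) ⊆ (K i).set (ω i) ∧ (J i).set (ω i) ⊆ (K i).set (ω i))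

/-- The shift, as a bilinear form, has `L² → L²` norm at most `1`. -/
def L2NormLEOne {d : ιa → ℕ} (D : ShiftData d) (ω : ∀ i, GridParam (d i)) : Prop :=
  ∀ f g : Pt d → ℝ, MemLp f 2 volume → MemLp g 2 volume →
    |D.pairing ω f g| ≤ (eLpNorm f 2 volume).toReal * (eLpNorm g 2 volume).toReal

/-- The shift is cancellative: all Haar functions appearing in its sum are
cancellative. -/
def Cancellative {d : ιa → ℕ} (D : ShiftData d) : Prop :=
  ∀ K I J, D.a K I J ≠ 0 →
    (∀ i, Canc (D.εI K I J i)) ∧ ∀ i, Canc (D.εJ K I J i)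

end ShiftData

/-- Interpretation of raw Boolean randomness as a grid parameter. -/
def toGP {k : ℕ} (b : ℤ → Fin k → Bool) : GridParam k :=
  fun j t => if b j t then 1 else 0


/-! ### Journé's class, defined by induction on the number of parameters -/

/-- Journé's classes of multi-parameter singular integrals, defined recursively on the
set `S` of active variables. `IsJourne δ false S Λ A` says that `Λ` is a Journé type
`δ`-SIO in the variables of `S` with constant `A`: for every `i ∈ S` there is a kernel
`K_i(x,y)`, taking values in the Journé type `δ`-CZOs in the remaining variables (with
the vector-valued standard size and Hölder estimates measured in the "CZ norm", i.e.
recursively by `IsJourne δ true`), representing `⟨Λ f, g⟩` when the supports in the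
`i`-th variable are disjoint. `IsJourne δ true S Λ A` says that `Λ` is a Journé type
`δ`-CZO: a Journé type `δ`-SIO, together with its partial adjoint structure, all of
whose partial adjoints are bounded on `L²` with norm `≤ A`.

An operator in the variables of `S` is represented by a family of bilinear forms on
functions of all variables, tested on inputs which are constant `1` outside `S`; the
`0`-parameter case `S = ∅` corresponds to scalars, for which the `L²` bound expresses
the absolute-value bound `|⟨Λ(1), 1⟩| ≤ A`. -/
def IsJourne {d : ιa → ℕ} (δ : ℝ) (b : Bool) (S : Finset ιa) (Λ : OpFam d) (A : ℝ) :
    Prop :=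
  if b then
    IsJourne δ false S Λ A ∧ AdjCompatOn S Λ ∧ ∀ U ⊆ S, L2BddOn S (Λ U) A
  else
    S = ∅ ∨
      ∀ i ∈ S, ∃ K : (Fin (d i) → ℝ) → (Fin (d i) → ℝ) → OpFam d,
        (∀ f g : FactorFn d, IsTestTupleOn S f → IsTestTupleOn S g →
          Disjoint (tsupport (f i)) (tsupport (g i)) →
          Λ ∅ (tensor f) (tensor g)
            = ∫ x : Fin (d i) → ℝ, ∫ y : Fin (d i) → ℝ,
                f i y * g i x *
                  (K x y) ∅ (tensor (Function.update f i (one (d i))))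
                    (tensor (Function.update g i (one (d i))))) ∧
        (∀ x y : Fin (d i) → ℝ, x ≠ y →
          IsJourne δ true (S.erase i) (K x y) (A / ‖x - y‖ ^ (d i : ℝ))) ∧
        (∀ x x' y : Fin (d i) → ℝ, x ≠ y → ‖x - x'‖ ≤ ‖x - y‖ / 2 →
          IsJourne δ true (S.erase i) (fun U u v => K x y U u v - K x' y U u v)
            (A * ‖x - x'‖ ^ δ / ‖x - y‖ ^ ((d i : ℝ) + δ))) ∧
        (∀ x y y' : Fin (d i) → ℝ, x ≠ y → ‖y - y'‖ ≤ ‖x - y‖ / 2 →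
          IsJourne δ true (S.erase i) (fun U u v => K x y U u v - K x y' U u v)
            (A * ‖y - y'‖ ^ δ / ‖x - y‖ ^ ((d i : ℝ) + δ)))
termination_by (S.card, b.toNat)
decreasing_by
  · exact Prod.Lex.right _ (by simp_all)
  all_goals exact Prod.Lex.left _ _ (Finset.card_erase_lt_of_mem (by assumption))


/-! ### Multi-parameter paraproducts -/

/-- The multi-parameter (dyadic) paraproduct `Π_b f` on `∏_{i : Fin (m+1)} ℝ^{d i}`:
`Π_b f = ∑_{J, ε canc} ⟨b, ⊗ h^ε_{J_i}⟩ ⟨f, (⊗_{i<m} h^ε_{J_i}) ⊗ h¹_{J_m}⟩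
(⊗_{i<m} h¹_{J_i}) ⊗ h^ε_{J_m} ∏ |J_i|^{-1/2}`, with `h¹ = |J|^{-1/2} χ_J` the
noncancellative Haar function, in the standard dyadic grids. -/
def paraprod {m : ℕ} (d : Fin (m + 1) → ℕ) (b f : Pt d → ℝ) : Pt d → ℝ :=
  fun x =>
    ∑' q : (∀ i, SCube (d i)) × (∀ i, Fin (d i) → Bool),
      (if ∀ i, Canc (q.2 i) then (1 : ℝ) else 0)
        * (∫ y : Pt d, b y * ∏ i, (q.1 i).haar (stdGP (d i)) (q.2 i) (y i))
        * (∫ y : Pt d, f y * ∏ i, (q.1 i).haar (stdGP (d i))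
            (if i = Fin.last m then fun _ => false else q.2 i) (y i))
        * (∏ i, (Real.sqrt ((q.1 i).vol))⁻¹)
        * ∏ i, (q.1 i).haar (stdGP (d i))
            (if i = Fin.last m then q.2 i else fun _ => false) (x i)

/-! ### Tri-parameter helpers -/

/-- Dimension tuple for a tri-parameter setting. -/
abbrev d3 (d₁ d₂ d₃ : ℕ) : Fin 3 → ℕ := ![d₁, d₂, d₃]

/-- The tuple of factor functions `(f₁, f₂, f₃)`. -/
def fn3 {d₁ d₂ d₃ : ℕ} (f₁ : (Fin d₁ → ℝ) → ℝ) (f₂ : (Fin d₂ → ℝ) → ℝ)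
    (f₃ : (Fin d₃ → ℝ) → ℝ) : FactorFn (d3 d₁ d₂ d₃) :=
  Fin.cons f₁ (Fin.cons f₂ (Fin.cons f₃ finZeroElim))

/-- The point `(x₁, x₂, x₃)`. -/
def pt3 {d₁ d₂ d₃ : ℕ} (x₁ : Fin d₁ → ℝ) (x₂ : Fin d₂ → ℝ) (x₃ : Fin d₃ → ℝ) :
    Pt (d3 d₁ d₂ d₃) :=
  Fin.cons x₁ (Fin.cons x₂ (Fin.cons x₃ finZeroElim))

/-- The partial pairing `⟨f, φ₁ ⊗ φ₃⟩_{1,3}`, a function of the second variable. -/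
def pair13 {d₁ d₂ d₃ : ℕ} (f : Pt (d3 d₁ d₂ d₃) → ℝ) (φ₁ : (Fin d₁ → ℝ) → ℝ)
    (φ₃ : (Fin d₃ → ℝ) → ℝ) : (Fin d₂ → ℝ) → ℝ :=
  fun x₂ => ∫ y₁ : Fin d₁ → ℝ, ∫ y₃ : Fin d₃ → ℝ, f (pt3 y₁ x₂ y₃) * φ₁ y₁ * φ₃ y₃

/-- The goodness parameter `γ = δ/(2d + 2δ)`. -/
def goodParam (k : ℕ) (δ : ℝ) : ℝ := δ / (2 * k + 2 * δ)


/-! ### Auxiliary lemmas for the proof -/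

section Aux

lemma two_zpow_pos' (s : ℤ) : 0 < (2:ℝ) ^ s := zpow_pos (by norm_num) s

lemma two_zpow_ne (s : ℤ) : (2:ℝ) ^ s ≠ 0 := (two_zpow_pos' s).ne'

lemma gp_term_nonneg {k : ℕ} {ω : GridParam k} (hω : IsGP ω) (j : ℤ) (t : Fin k) :
    0 ≤ (2:ℝ)^(-j) * ω j t := by
  rcases hω j t with h0 | h1
  · rw [h0, mul_zero]
  · rw [h1, mul_one]; positivity

lemma gp_term_le {k : ℕ} {ω : GridParam k} (hω : IsGP ω) (j : ℤ) (t : Fin k) :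
    (2:ℝ)^(-j) * ω j t ≤ (2:ℝ)^(-j) := by
  rcases hω j t with h0 | h1
  · rw [h0, mul_zero]; positivity
  · rw [h1, mul_one]

/-- Summability of the grid-shift series. -/
lemma summable_gpShift {k : ℕ} {ω : GridParam k} (hω : IsGP ω) (s : ℤ) (t : Fin k) :
    Summable fun j : ℤ => if s < j then (2:ℝ)^(-j) * ω j t else 0 := by
  have hb : Summable fun j : ℤ => if s < j then (2:ℝ)^(-j) else 0 := by
    have hinj : Function.Injective (fun n : ℕ => s + 1 + (n:ℤ)) := by
      intro a b h; simpa using h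
    have h0 : ∀ x ∉ Set.range (fun n : ℕ => s + 1 + (n:ℤ)),
        (if s < x then (2:ℝ)^(-x) else 0) = 0 := by
      intro x hx
      rw [if_neg]
      intro hsx
      refine hx ⟨(x - s - 1).toNat, ?_⟩
      show s + 1 + ((x - s - 1).toNat : ℤ) = x
      omega
    rw [← Function.Injective.summable_iff hinj h0]
    have heq : ((fun j : ℤ => if s < j then (2:ℝ)^(-j) else 0) ∘ (fun n : ℕ => s + 1 + (n:ℤ)))
        = fun n : ℕ => (2:ℝ)^(-(s+1)) * (2⁻¹:ℝ)^n := by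
      funext n
      simp only [Function.comp]
      rw [if_pos (by omega)]
      rw [show -(s + 1 + (n:ℤ)) = -(s+1) + (-(n:ℤ)) by ring,
        zpow_add₀ (by norm_num : (2:ℝ) ≠ 0)]
      congr 1
      rw [zpow_neg, zpow_natCast, inv_pow]
    rw [heq]
    exact Summable.mul_left _ (summable_geometric_of_lt_one (by norm_num) (by norm_num))
  apply Summable.of_nonneg_of_le _ _ hb
  · intro j
    by_cases h : s < j
    · rw [if_pos h]; exact gp_term_nonneg hω j t
    · rw [if_neg h]
  · intro j
    by_cases h : s < j
    · rw [if_pos h, if_pos h]; exact gp_term_le hω j t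
    · rw [if_neg h, if_neg h]

/-- The grid shifts at two scales differ by an integer multiple of the finer scale. -/
lemma gpShift_sub {k : ℕ} {ω : GridParam k} (hω : IsGP ω) {s s' : ℤ} (h : s ≤ s') (t : Fin k) :
    ∃ z : ℤ, gpShift ω s t = gpShift ω s' t + z * (2:ℝ)^(-s') := by
  classical
  set f : ℤ → ℝ := fun j => if s < j then (2:ℝ)^(-j) * ω j t else 0 with hf
  set g : ℤ → ℝ := fun j => if s' < j then (2:ℝ)^(-j) * ω j t else 0 with hg
  set h2 : ℤ → ℝ := fun j => if s < j ∧ j ≤ s' then (2:ℝ)^(-j) * ω j t else 0 with hh2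
  have hfg : ∀ j, f j = g j + h2 j := by
    intro j
    simp only [hf, hg, hh2]
    by_cases h1 : s < j
    · by_cases hj2 : s' < j
      · rw [if_pos h1, if_pos hj2, if_neg (by omega)]; ring
      · rw [if_pos h1, if_neg hj2, if_pos ⟨h1, by omega⟩]; ring
    · rw [if_neg h1, if_neg (by omega), if_neg (by intro hc; exact h1 hc.1)]; ring
  have hsg : Summable g := summable_gpShift hω s' t
  have hsf : Summable f := summable_gpShift hω s t
  have hsh2 : Summable h2 := by
    apply Summable.of_nonneg_of_le _ _ hsf
    · intro j
      simp only [hh2]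
      split
      · exact gp_term_nonneg hω j t
      · exact le_rfl
    · intro j
      rw [hfg j]
      simp only [hg]
      split
      · have := gp_term_nonneg hω j t
        nlinarith [hfg j]
      · simp
  have hth2 : ∑' j, h2 j = ∑ j ∈ Finset.Ioc s s', h2 j := by
    apply tsum_eq_sum
    intro b hb
    simp only [hh2]
    rw [if_neg]
    intro hc
    exact hb (Finset.mem_Ioc.2 ⟨hc.1, hc.2⟩)
  set z : ℤ := ∑ j ∈ Finset.Ioc s s', (if ω j t = 1 then 2^(s'-j).toNat else 0 : ℤ) with hz
  have hsum : ∑ j ∈ Finset.Ioc s s', h2 j = (z:ℝ) * (2:ℝ)^(-s') := by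
    rw [hz]
    push_cast
    rw [Finset.sum_mul]
    apply Finset.sum_congr rfl
    intro j hj
    rw [Finset.mem_Ioc] at hj
    simp only [hh2]
    rw [if_pos ⟨hj.1, hj.2⟩]
    rcases hω j t with h0 | h1
    · rw [h0, if_neg (by norm_num), mul_zero]
      simp
    · rw [h1, if_pos rfl, mul_one]
      rw [← zpow_natCast (2:ℝ) (s'-j).toNat, Int.toNat_of_nonneg (by omega),
        ← zpow_add₀ (by norm_num : (2:ℝ) ≠ 0)]
      congr 1
      omega
  refine ⟨z, ?_⟩
  have hsplit : gpShift ω s t = ∑' j, g j + ∑' j, h2 j := by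
    unfold gpShift
    rw [show (fun j : ℤ => if s < j then (2:ℝ)^(-j) * ω j t else 0) = f from rfl]
    rw [show f = fun j => g j + h2 j from funext hfg]
    exact Summable.tsum_add hsg hsh2
  rw [hsplit, hth2, hsum]
  rfl

/-- Dichotomy for half-open lattice intervals. -/
lemma ico_dichotomy {s s' : ℤ} (hss : s ≤ s') {p q : ℝ} (z : ℤ)
    (hz : p - q = z * (2:ℝ)^(-s')) :
    (q ≤ p ∧ p + (2:ℝ)^(-s') ≤ q + (2:ℝ)^(-s)) ∨
      p + (2:ℝ)^(-s') ≤ q ∨ q + (2:ℝ)^(-s) ≤ p := by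
  have h2 : (2:ℝ)^(-s) = ((2^(s'-s).toNat : ℤ) : ℝ) * (2:ℝ)^(-s') := by
    push_cast
    rw [← zpow_natCast (2:ℝ) (s'-s).toNat, Int.toNat_of_nonneg (by omega),
      ← zpow_add₀ (by norm_num : (2:ℝ) ≠ 0)]
    congr 1
    omega
  set N : ℤ := 2^(s'-s).toNat with hN
  have hN1 : 1 ≤ N := by
    have := pow_pos (show (0:ℤ) < 2 by norm_num) (s'-s).toNat
    omega
  have hpos := two_zpow_pos' (-s')
  rcases le_or_gt z (-1) with hle | hgt
  · right; left
    have : (z:ℝ) ≤ -1 := by exact_mod_cast hle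
    nlinarith
  · rcases le_or_gt N z with hge | hmid
    · right; right
      have : (N:ℝ) ≤ (z:ℝ) := by exact_mod_cast hge
      rw [h2]
      nlinarith
    · left
      have hz0 : (0:ℝ) ≤ (z:ℝ) := by exact_mod_cast (by omega : (0:ℤ) ≤ z)
      have hzN : (z:ℝ) + 1 ≤ (N:ℝ) := by exact_mod_cast (by omega : z + 1 ≤ N)
      constructor
      · nlinarith
      · rw [h2]
        nlinarith

/-- Fine interval does not straddle the midpoint of the coarse interval. -/
lemma ico_half {s s' : ℤ} (hss : s < s') {p q : ℝ} (z : ℤ)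
    (hz : p - q = z * (2:ℝ)^(-s')) :
    p + (2:ℝ)^(-s') ≤ q + (2:ℝ)^(-s)/2 ∨ q + (2:ℝ)^(-s)/2 ≤ p := by
  have h2 : (2:ℝ)^(-s)/2 = ((2^(s'-s-1).toNat : ℤ) : ℝ) * (2:ℝ)^(-s') := by
    push_cast
    rw [← zpow_natCast (2:ℝ) (s'-s-1).toNat, Int.toNat_of_nonneg (by omega),
      ← zpow_add₀ (by norm_num : (2:ℝ) ≠ 0)]
    rw [show (2:ℝ)^(-s)/2 = (2:ℝ)^(-s) * 2⁻¹ by ring, show (2⁻¹ : ℝ) = (2:ℝ)^(-1:ℤ) by norm_num,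
      ← zpow_add₀ (by norm_num : (2:ℝ) ≠ 0)]
    congr 1
    omega
  set M : ℤ := 2^(s'-s-1).toNat with hM
  have hpos := two_zpow_pos' (-s')
  rcases le_or_gt M z with hge | hlt
  · right
    have : (M:ℝ) ≤ (z:ℝ) := by exact_mod_cast hge
    rw [h2]
    nlinarith
  · left
    have : (z:ℝ) + 1 ≤ (M:ℝ) := by exact_mod_cast (by omega : z + 1 ≤ M)
    rw [h2]
    nlinarith

end Aux
section Haar1

lemma measurable_haar1 (a l : ℝ) (e : Bool) : Measurable (haar1 a l e) := by
  unfold haar1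
  have h1 : MeasurableSet {u : ℝ | a ≤ u ∧ u < a + l} := by
    have : {u : ℝ | a ≤ u ∧ u < a + l} = Set.Ico a (a + l) := by
      ext u; simp [Set.mem_Ico]
    rw [this]; exact measurableSet_Ico
  refine Measurable.ite h1 ?_ measurable_const
  refine Measurable.mul ?_ measurable_const
  cases e
  · exact measurable_const
  · simp only [Bool.cond_true, if_true]
    exact Measurable.ite (measurableSet_lt measurable_id measurable_const)
      measurable_const measurable_const

lemma haar1_abs_le (a l : ℝ) (e : Bool) (u : ℝ) :
    |haar1 a l e u| ≤ Set.indicator (Set.Ico a (a+l)) (fun _ => |(Real.sqrt l)⁻¹|) u := by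
  unfold haar1
  by_cases h : a ≤ u ∧ u < a + l
  · rw [if_pos h, Set.indicator_of_mem (by simpa [Set.mem_Ico] using h)]
    rw [abs_mul]
    have : |if e = true then (if u < a + l / 2 then (1:ℝ) else -1) else 1| ≤ 1 := by
      cases e
      · simp
      · simp only [if_true]
        split <;> simp
    nlinarith [abs_nonneg ((Real.sqrt l)⁻¹)]
  · rw [if_neg h, Set.indicator_of_notMem (by simpa [Set.mem_Ico] using h)]
    simp

lemma integrable_haar1 (a l : ℝ) (e : Bool) : Integrable (haar1 a l e) := by
  have hgint : Integrable (Set.indicator (Set.Ico a (a+l)) (fun _ : ℝ => |(Real.sqrt l)⁻¹|)) := by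
    refine (integrable_indicator_iff measurableSet_Ico).2 ?_
    apply (MeasureTheory.integrableOn_const_iff (hC := enorm_ne_top)).2
    right
    rw [Real.volume_Ico]
    exact ENNReal.ofReal_lt_top
  apply hgint.mono' (measurable_haar1 a l e).aestronglyMeasurable
  exact Filter.Eventually.of_forall fun u => by
    rw [Real.norm_eq_abs]; exact haar1_abs_le a l e u

lemma haar1_bdd (a l : ℝ) (e : Bool) (u : ℝ) : |haar1 a l e u| ≤ |(Real.sqrt l)⁻¹| := by
  refine le_trans (haar1_abs_le a l e u) ?_
  classical
  rw [Set.indicator]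
  split
  · exact le_rfl
  · exact abs_nonneg _

lemma integrable_haar1_mul (a l a' l' : ℝ) (e e' : Bool) :
    Integrable (fun u => haar1 a l e u * haar1 a' l' e' u) := by
  apply MeasureTheory.Integrable.mono'
    (((integrable_haar1 a' l' e').abs).const_mul |(Real.sqrt l)⁻¹|)
    ((measurable_haar1 a l e).mul (measurable_haar1 a' l' e')).aestronglyMeasurable
  refine Filter.Eventually.of_forall fun u => ?_
  rw [Real.norm_eq_abs, Pi.mul_apply, abs_mul]
  exact mul_le_mul_of_nonneg_right (haar1_bdd a l e u) (abs_nonneg _)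

lemma haar1_ne_zero {a l : ℝ} {e : Bool} {u : ℝ} (h : haar1 a l e u ≠ 0) :
    a ≤ u ∧ u < a + l := by
  by_contra hc
  exact h (by unfold haar1; rw [if_neg hc])

lemma haar1_true_eq {a l : ℝ} (hl : 0 < l) :
    haar1 a l true = fun u => Set.indicator (Set.Ico a (a+l/2)) (fun _ => (Real.sqrt l)⁻¹) u
      - Set.indicator (Set.Ico (a+l/2) (a+l)) (fun _ => (Real.sqrt l)⁻¹) u := by
  funext u
  unfold haar1
  classical
  by_cases hmem : a ≤ u ∧ u < a + l
  · by_cases hu : u < a + l / 2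
    · rw [if_pos hmem, Set.indicator_of_mem (by simp [Set.mem_Ico]; exact ⟨hmem.1, hu⟩),
        Set.indicator_of_notMem (by simp [Set.mem_Ico]; intro h; linarith)]
      simp [hu]
    · rw [if_pos hmem, Set.indicator_of_notMem (by simp [Set.mem_Ico]; intro h; linarith),
        Set.indicator_of_mem (by simp [Set.mem_Ico]; exact ⟨by linarith, hmem.2⟩)]
      simp [hu]
  · rw [if_neg hmem]
    have h1 : u ∉ Set.Ico a (a+l/2) := by
      simp only [Set.mem_Ico, not_and_or, not_lt, not_le] at hmem ⊢
      rcases hmem with h | h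
      · left; linarith
      · right; linarith
    have h2 : u ∉ Set.Ico (a+l/2) (a+l) := by
      simp only [Set.mem_Ico, not_and_or, not_lt, not_le] at hmem ⊢
      rcases hmem with h | h
      · left; linarith
      · right; linarith
    rw [Set.indicator_of_notMem h1, Set.indicator_of_notMem h2]
    ring

lemma integral_haar1_true (a l : ℝ) (hl : 0 < l) : ∫ u, haar1 a l true u = 0 := by
  rw [haar1_true_eq hl]
  rw [MeasureTheory.integral_sub
    ((integrable_indicator_iff measurableSet_Ico).2 ((MeasureTheory.integrableOn_const_iff (hC := enorm_ne_top)).2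
      (Or.inr (by rw [Real.volume_Ico]; exact ENNReal.ofReal_lt_top))))
    ((integrable_indicator_iff measurableSet_Ico).2 ((MeasureTheory.integrableOn_const_iff (hC := enorm_ne_top)).2
      (Or.inr (by rw [Real.volume_Ico]; exact ENNReal.ofReal_lt_top))))]
  rw [integral_indicator_const _ measurableSet_Ico, integral_indicator_const _ measurableSet_Ico]
  rw [Real.volume_real_Ico, Real.volume_real_Ico]
  rw [show a + l / 2 - a = l/2 by ring, show a + l - (a + l/2) = l/2 by ring]
  ring

lemma integral_haar1_sq (a l : ℝ) (hl : 0 < l) (e : Bool) :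
    ∫ u, haar1 a l e u * haar1 a l e u = 1 := by
  have hind : (fun u => haar1 a l e u * haar1 a l e u)
      = Set.indicator (Set.Ico a (a+l)) (fun _ => l⁻¹) := by
    funext u
    unfold haar1
    classical
    by_cases hmem : a ≤ u ∧ u < a + l
    · rw [if_pos hmem, Set.indicator_of_mem (by simpa [Set.mem_Ico] using hmem)]
      have hsq : (Real.sqrt l)⁻¹ * (Real.sqrt l)⁻¹ = l⁻¹ := by
        rw [← mul_inv, Real.mul_self_sqrt hl.le]
      cases e
      · simpa using hsq
      · simp only [if_true]
        split
        · calc (1 * (Real.sqrt l)⁻¹) * (1 * (Real.sqrt l)⁻¹)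
              = (Real.sqrt l)⁻¹ * (Real.sqrt l)⁻¹ := by ring
            _ = l⁻¹ := hsq
        · calc ((-1) * (Real.sqrt l)⁻¹) * ((-1) * (Real.sqrt l)⁻¹)
              = (Real.sqrt l)⁻¹ * (Real.sqrt l)⁻¹ := by ring
            _ = l⁻¹ := hsq
    · rw [if_neg hmem, Set.indicator_of_notMem (by simpa [Set.mem_Ico] using hmem)]
      ring
  rw [hind, integral_indicator_const _ measurableSet_Ico, Real.volume_real_Ico,
    show a + l - a = l by ring, max_eq_left hl.le, smul_eq_mul]
  field_simp

lemma integral_haar1_cross (a l : ℝ) (hl : 0 < l) {e e' : Bool} (h : e ≠ e') :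
    ∫ u, haar1 a l e u * haar1 a l e' u = 0 := by
  have key : (fun u => haar1 a l e u * haar1 a l e' u)
      = fun u => (Real.sqrt l)⁻¹ * haar1 a l true u := by
    funext u
    unfold haar1
    classical
    by_cases hmem : a ≤ u ∧ u < a + l
    · rw [if_pos hmem, if_pos hmem, if_pos hmem]
      cases e
      · cases e'
        · exact absurd rfl h
        · simp only [Bool.false_eq_true, if_false, if_true]
          ring
      · cases e'
        · simp only [Bool.false_eq_true, if_false, if_true]
          ring
        · exact absurd rfl h
    · rw [if_neg hmem, if_neg hmem, if_neg hmem]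
      ring
  rw [key, MeasureTheory.integral_const_mul, integral_haar1_true a l hl, mul_zero]

lemma integral_haar1_disj {a l a' l' : ℝ} {e e' : Bool}
    (h : a + l ≤ a' ∨ a' + l' ≤ a) :
    ∫ u, haar1 a l e u * haar1 a' l' e' u = 0 := by
  have : (fun u => haar1 a l e u * haar1 a' l' e' u) = fun _ => (0:ℝ) := by
    funext u
    by_cases h1 : haar1 a l e u = 0
    · rw [h1, zero_mul]
    by_cases h2 : haar1 a' l' e' u = 0
    · rw [h2, mul_zero]
    obtain ⟨ha1, ha2⟩ := haar1_ne_zero h1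
    obtain ⟨hb1, hb2⟩ := haar1_ne_zero h2
    rcases h with h | h <;> linarith
  rw [this, MeasureTheory.integral_zero]

lemma integral_haar1_nested {a l a' l' : ℝ} {e : Bool} (hl' : 0 < l')
    (hc : ∃ c, ∀ u, a' ≤ u → u < a' + l' → haar1 a l e u = c) :
    ∫ u, haar1 a l e u * haar1 a' l' true u = 0 := by
  obtain ⟨c, hc⟩ := hc
  have : (fun u => haar1 a l e u * haar1 a' l' true u)
      = fun u => c * haar1 a' l' true u := by
    funext u
    by_cases h2 : haar1 a' l' true u = 0
    · rw [h2, mul_zero, mul_zero]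
    obtain ⟨hb1, hb2⟩ := haar1_ne_zero h2
    rw [hc u hb1 hb2]
  rw [this, MeasureTheory.integral_const_mul, integral_haar1_true a' l' hl', mul_zero]

end Haar1
section SCubeLemmas

variable {k : ℕ}

lemma scube_len_pos (I : SCube k) : 0 < I.len := two_zpow_pos' _

lemma measurable_scube_haar (I : SCube k) (ω : GridParam k) (ε : Fin k → Bool) :
    Measurable (I.haar ω ε) := by
  unfold SCube.haar
  exact Finset.measurable_prod _ fun t _ =>
    (measurable_haar1 (I.corner ω t) I.len (ε t)).comp (measurable_pi_apply t)

lemma integrable_scube_haar_mul (I I' : SCube k) (ω : GridParam k) (ε ε' : Fin k → Bool) :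
    Integrable (fun x : Fin k → ℝ => I.haar ω ε x * I'.haar ω ε' x) := by
  have : (fun x : Fin k → ℝ => I.haar ω ε x * I'.haar ω ε' x)
      = fun x => ∏ t, (fun u => haar1 (I.corner ω t) I.len (ε t) u
          * haar1 (I'.corner ω t) I'.len (ε' t) u) (x t) := by
    funext x
    simp only [SCube.haar]
    rw [← Finset.prod_mul_distrib]
  rw [this]
  exact MeasureTheory.Integrable.fintype_prod_dep fun t =>
    integrable_haar1_mul _ _ _ _ _ _

lemma memℒp_scube_haar (I : SCube k) (ω : GridParam k) (ε : Fin k → Bool) :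
    MemLp (I.haar ω ε) 2 volume := by
  rw [memLp_two_iff_integrable_sq (measurable_scube_haar I ω ε).aestronglyMeasurable]
  have : (fun x : Fin k → ℝ => I.haar ω ε x ^ 2)
      = fun x => I.haar ω ε x * I.haar ω ε x := by
    funext x; ring
  rw [this]
  exact integrable_scube_haar_mul I I ω ε ε

/-- Fubini for products of Haar functions. -/
lemma integral_scube_haar_mul (I I' : SCube k) (ω : GridParam k) (ε ε' : Fin k → Bool) :
    ∫ x : Fin k → ℝ, I.haar ω ε x * I'.haar ω ε' x
      = ∏ t, ∫ u, haar1 (I.corner ω t) I.len (ε t) u * haar1 (I'.corner ω t) I'.len (ε' t) u := by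
  have : (fun x : Fin k → ℝ => I.haar ω ε x * I'.haar ω ε' x)
      = fun x => ∏ t, (fun u => haar1 (I.corner ω t) I.len (ε t) u
          * haar1 (I'.corner ω t) I'.len (ε' t) u) (x t) := by
    funext x
    simp only [SCube.haar]
    rw [← Finset.prod_mul_distrib]
  rw [this]
  exact MeasureTheory.integral_fintype_prod_eq_prod
    (fun t u => haar1 (I.corner ω t) I.len (ε t) u * haar1 (I'.corner ω t) I'.len (ε' t) u)

/-- Corners of two cubes differ by an integer multiple of the finer scale. -/
lemma corner_sub {ω : GridParam k} (hω : IsGP ω) {I I' : SCube k}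
    (h : I.s ≤ I'.s) (t : Fin k) :
    ∃ z : ℤ, I'.corner ω t - I.corner ω t = z * (2:ℝ)^(-I'.s) := by
  obtain ⟨z₀, hz₀⟩ := gpShift_sub hω h t
  refine ⟨I'.m t - I.m t * 2^(I'.s - I.s).toNat - z₀, ?_⟩
  unfold SCube.corner
  rw [hz₀]
  have h2 : (2:ℝ)^(-I.s) = ((2^(I'.s - I.s).toNat : ℤ) : ℝ) * (2:ℝ)^(-I'.s) := by
    push_cast
    rw [← zpow_natCast (2:ℝ) (I'.s - I.s).toNat, Int.toNat_of_nonneg (by omega),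
      ← zpow_add₀ (by norm_num : (2:ℝ) ≠ 0)]
    congr 1
    omega
  rw [h2]
  push_cast
  ring

/-- The master orthogonality computation, fine-vs-coarse case. -/
lemma factor_zero_of_lt {ω : GridParam k} (hω : IsGP ω) {I I' : SCube k} (hs : I.s < I'.s)
    (ε ε' : Fin k → Bool) (hc' : Canc ε') :
    ∃ t, ∫ u, haar1 (I.corner ω t) I.len (ε t) u
        * haar1 (I'.corner ω t) I'.len (ε' t) u = 0 := by
  by_cases hdis : ∃ t, I.corner ω t + I.len ≤ I'.corner ω t
      ∨ I'.corner ω t + I'.len ≤ I.corner ω t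
  · obtain ⟨t, ht⟩ := hdis
    exact ⟨t, integral_haar1_disj ht⟩
  · push_neg at hdis
    have hsub : ∀ t, I.corner ω t ≤ I'.corner ω t ∧
        I'.corner ω t + I'.len ≤ I.corner ω t + I.len := by
      intro t
      obtain ⟨z, hz⟩ := corner_sub hω hs.le t
      rcases ico_dichotomy hs.le z hz with hcont | hd | hd
      · exact hcont
      · exact absurd hd (by have := (hdis t).2; unfold SCube.len at *; linarith)
      · exact absurd hd (by have := (hdis t).1; unfold SCube.len at *; linarith)
    obtain ⟨t₀, ht₀⟩ := hc'
    refine ⟨t₀, ?_⟩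
    rw [ht₀]
    apply integral_haar1_nested (scube_len_pos I')
    obtain ⟨z, hz⟩ := corner_sub hω hs.le t₀
    rcases ico_half hs z hz with hfin | hfin
    · -- fine interval in the left half
      refine ⟨(if ε t₀ = true then 1 else 1) * (Real.sqrt I.len)⁻¹, fun u hu1 hu2 => ?_⟩
      unfold haar1
      rw [if_pos ⟨le_trans (hsub t₀).1 hu1, lt_of_lt_of_le hu2 (hsub t₀).2⟩]
      rw [if_pos (show u < I.corner ω t₀ + I.len / 2 by
        unfold SCube.len at *; linarith)]
    · -- fine interval in the right half
      refine ⟨(if ε t₀ = true then -1 else 1) * (Real.sqrt I.len)⁻¹, fun u hu1 hu2 => ?_⟩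
      unfold haar1
      rw [if_pos ⟨le_trans (hsub t₀).1 hu1, lt_of_lt_of_le hu2 (hsub t₀).2⟩]
      rw [if_neg (show ¬ u < I.corner ω t₀ + I.len / 2 by
        unfold SCube.len at *; push_neg; linarith)]

/-- Orthonormality of the Haar system of a fixed grid, at the level of integrals. -/
lemma scube_haar_orth {ω : GridParam k} (hω : IsGP ω)
    (I I' : SCube k) (ε ε' : Fin k → Bool) (hc : Canc ε) (hc' : Canc ε') :
    ∫ x : Fin k → ℝ, I.haar ω ε x * I'.haar ω ε' x
      = if I = I' ∧ ε = ε' then 1 else 0 := by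
  rw [integral_scube_haar_mul]
  split_ifs with heq
  · obtain ⟨h1, h2⟩ := heq
    subst h1; subst h2
    apply Finset.prod_eq_one
    intro t _
    exact integral_haar1_sq _ _ (scube_len_pos I) (ε t)
  · rcases lt_trichotomy I.s I'.s with hss | hss | hss
    · obtain ⟨t, ht⟩ := factor_zero_of_lt hω hss ε ε' hc'
      exact Finset.prod_eq_zero (Finset.mem_univ t) ht
    · -- same scale
      by_cases hmm : I.m = I'.m
      · have hII : I = I' := by
          cases I; cases I'; simp_all
        subst hII
        have hee : ε ≠ ε' := fun h => heq ⟨rfl, h⟩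
        obtain ⟨t, ht⟩ := Function.ne_iff.1 hee
        refine Finset.prod_eq_zero (Finset.mem_univ t) ?_
        exact integral_haar1_cross _ _ (scube_len_pos I) ht
      · obtain ⟨t, ht⟩ := Function.ne_iff.1 hmm
        have hz : I'.corner ω t - I.corner ω t = ((I'.m t - I.m t : ℤ) : ℝ) * (2:ℝ)^(-I'.s) := by
          unfold SCube.corner
          rw [hss]
          push_cast
          ring
        rcases ico_dichotomy (le_of_eq hss) _ hz with hcont | hd | hd
        · exfalso
          have h1 : I'.corner ω t = I.corner ω t := by
            have := hcont.1
            have := hcont.2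
            rw [hss] at *
            linarith
          have : ((I'.m t - I.m t : ℤ) : ℝ) * (2:ℝ)^(-I'.s) = 0 := by
            rw [← hz, h1]; ring
          rcases mul_eq_zero.1 this with h | h
          · have : I'.m t - I.m t = 0 := by exact_mod_cast h
            omega
          · exact two_zpow_ne _ h
        · refine Finset.prod_eq_zero (Finset.mem_univ t) ?_
          apply integral_haar1_disj
          right
          unfold SCube.len
          linarith
        · refine Finset.prod_eq_zero (Finset.mem_univ t) ?_
          apply integral_haar1_disj
          left
          unfold SCube.len
          linarith
    · obtain ⟨t, ht⟩ := factor_zero_of_lt hω hss ε' ε hc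
      refine Finset.prod_eq_zero (Finset.mem_univ t) ?_
      rw [show (fun u => haar1 (I.corner ω t) I.len (ε t) u
          * haar1 (I'.corner ω t) I'.len (ε' t) u)
        = fun u => haar1 (I'.corner ω t) I'.len (ε' t) u
          * haar1 (I.corner ω t) I.len (ε t) u from funext fun u => mul_comm _ _]
      exact ht

/-- The underlying set of a shifted dyadic cube. -/
lemma scube_set_eq (I : SCube k) (ω : GridParam k) :
    I.set ω = Set.pi Set.univ (fun t => Set.Ico (I.corner ω t) (I.corner ω t + I.len)) := by
  ext x
  simp [SCube.set, Set.mem_pi, Set.mem_Ico]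

lemma scube_set_measurable (I : SCube k) (ω : GridParam k) : MeasurableSet (I.set ω) := by
  rw [scube_set_eq]
  exact MeasurableSet.univ_pi fun t => measurableSet_Ico

lemma scube_set_nonempty (I : SCube k) (ω : GridParam k) : (I.set ω).Nonempty := by
  refine ⟨fun t => I.corner ω t, fun t => ⟨le_rfl, ?_⟩⟩
  have := scube_len_pos I
  linarith

lemma scube_volume (I : SCube k) (ω : GridParam k) :
    volume (I.set ω) = (ENNReal.ofReal I.len) ^ k := by
  rw [scube_set_eq, MeasureTheory.volume_pi_pi]
  have : ∀ t : Fin k, volume (Set.Ico (I.corner ω t) (I.corner ω t + I.len))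
      = ENNReal.ofReal I.len := by
    intro t
    rw [Real.volume_Ico]
    congr 1
    ring
  rw [Finset.prod_congr rfl fun t _ => this t, Finset.prod_const]
  simp

lemma scube_disj_same_scale {ω : GridParam k} {I I' : SCube k}
    (hs : I.s = I'.s) (hne : I ≠ I') :
    Disjoint (I.set ω) (I'.set ω) := by
  have hm : I.m ≠ I'.m := by
    intro h
    apply hne
    cases I; cases I'
    simp_all
  obtain ⟨t, ht⟩ := Function.ne_iff.1 hm
  rw [Set.disjoint_left]
  intro x hx hx'
  have h1 := hx t
  have h2 := hx' t
  have hz : I'.corner ω t - I.corner ω t = ((I'.m t - I.m t : ℤ) : ℝ) * (2:ℝ)^(-I.s) := by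
    unfold SCube.corner
    rw [hs]
    push_cast
    ring
  have hpos := two_zpow_pos' (-I.s)
  have habs : I'.m t - I.m t ≠ 0 := by omega
  unfold SCube.len at h1 h2
  rw [← hs] at h2
  rcases lt_or_gt_of_ne habs with h | h
  · have : ((I'.m t - I.m t : ℤ) : ℝ) ≤ -1 := by exact_mod_cast (by omega : I'.m t - I.m t ≤ -1)
    nlinarith [h1.1, h1.2, h2.1, h2.2]
  · have : (1:ℝ) ≤ ((I'.m t - I.m t : ℤ) : ℝ) := by exact_mod_cast (by omega : 1 ≤ I'.m t - I.m t)
    nlinarith [h1.1, h1.2, h2.1, h2.2]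

/-- Volume counting: subcubes of `K` at a fixed finer scale. -/
lemma card_subcubes {ω : GridParam k} (K : SCube k) (s' : ℤ) (hs : K.s ≤ s')
    (S : Finset (SCube k)) (hS : ∀ J ∈ S, J.s = s' ∧ J.set ω ⊆ K.set ω) :
    (S.card : ℝ) * ((2:ℝ)^(-s'))^k ≤ ((2:ℝ)^(-K.s))^k := by
  have hdisj : (S : Set (SCube k)).PairwiseDisjoint (fun J => J.set ω) := by
    intro J hJ J' hJ' hne
    exact scube_disj_same_scale
      (by rw [(hS J (by simpa using hJ)).1, (hS J' (by simpa using hJ')).1]) hne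
  have hmeas := measure_biUnion_finset (μ := volume) hdisj (fun J _ => scube_set_measurable J ω)
  have hle : ∑ J ∈ S, volume (J.set ω) ≤ volume (K.set ω) := by
    rw [← hmeas]
    exact measure_mono (Set.iUnion₂_subset fun J hJ => (hS J hJ).2)
  have hvols : ∀ J ∈ S, volume (J.set ω) = (ENNReal.ofReal ((2:ℝ)^(-s')))^k := by
    intro J hJ
    rw [scube_volume]
    unfold SCube.len
    rw [(hS J hJ).1]
  rw [Finset.sum_congr rfl hvols, Finset.sum_const, scube_volume] at hle
  unfold SCube.len at hle
  have hKfin : ((ENNReal.ofReal ((2:ℝ)^(-K.s)))^k : ℝ≥0∞) ≠ ⊤ := by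
    apply ENNReal.pow_ne_top
    exact ENNReal.ofReal_ne_top
  have hfinal := ENNReal.toReal_mono hKfin hle
  rw [nsmul_eq_mul, ENNReal.toReal_mul, ENNReal.toReal_natCast, ENNReal.toReal_pow,
    ENNReal.toReal_pow, ENNReal.toReal_ofReal (by positivity : (0:ℝ) ≤ (2:ℝ)^(-s')),
    ENNReal.toReal_ofReal (by positivity : (0:ℝ) ≤ (2:ℝ)^(-K.s))] at hfinal
  exact hfinal

end SCubeLemmas
section TensorHaar

variable {n : ℕ} {d : Fin n → ℕ}

/-- Index type of the triple sum of a shift. -/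
abbrev QIdx (d : Fin n → ℕ) : Type :=
  (∀ i, SCube (d i)) × (∀ i, SCube (d i)) × (∀ i, SCube (d i))

/-- Index type of a tensor Haar function. -/
abbrev PIdx (d : Fin n → ℕ) : Type :=
  (∀ i, SCube (d i)) × (∀ i, Fin (d i) → Bool)

/-- Tensor Haar function. -/
def tH (ω : ∀ i, GridParam (d i)) (p : PIdx d) : Pt d → ℝ :=
  fun x => ∏ i, (p.1 i).haar (ω i) (p.2 i) (x i)

def φm (D : ShiftData d) : QIdx d → PIdx d := fun q => (q.2.1, D.εI q.1 q.2.1 q.2.2)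

def ψm (D : ShiftData d) : QIdx d → PIdx d := fun q => (q.2.2, D.εJ q.1 q.2.1 q.2.2)

def Xint (ω : ∀ i, GridParam (d i)) (f : Pt d → ℝ) (p : PIdx d) : ℝ :=
  ∫ y : Pt d, f y * tH ω p y

def shiftTerm (D : ShiftData d) (ω : ∀ i, GridParam (d i)) (f g : Pt d → ℝ)
    (q : QIdx d) : ℝ :=
  D.a q.1 q.2.1 q.2.2 * Xint ω f (φm D q) * Xint ω g (ψm D q)

lemma pairing_eq (D : ShiftData d) (ω : ∀ i, GridParam (d i)) (f g : Pt d → ℝ) :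
    D.pairing ω f g = ∑' q : QIdx d, shiftTerm D ω f g q := by
  unfold ShiftData.pairing shiftTerm Xint tH φm ψm
  rfl

lemma measurable_tH (ω : ∀ i, GridParam (d i)) (p : PIdx d) : Measurable (tH ω p) := by
  unfold tH
  exact Finset.measurable_prod _ fun i _ =>
    (measurable_scube_haar _ _ _).comp (measurable_pi_apply i)

lemma memℒp_tH (ω : ∀ i, GridParam (d i)) (p : PIdx d) : MemLp (tH ω p) 2 volume := by
  rw [memLp_two_iff_integrable_sq (measurable_tH ω p).aestronglyMeasurable]
  have h1 : (fun x : Pt d => tH ω p x ^ 2)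
      = fun x => ∏ i, (fun y => ((p.1 i).haar (ω i) (p.2 i) y)^2) (x i) := by
    funext x
    unfold tH
    rw [← Finset.prod_pow]
  rw [h1]
  refine MeasureTheory.Integrable.fintype_prod_dep
    (f := fun i y => ((p.1 i).haar (ω i) (p.2 i) y)^2) fun i => ?_
  show Integrable (fun y => ((p.1 i).haar (ω i) (p.2 i) y)^2) volume
  have h2 : (fun y => ((p.1 i).haar (ω i) (p.2 i) y)^2)
      = fun y => (p.1 i).haar (ω i) (p.2 i) y * (p.1 i).haar (ω i) (p.2 i) y := by
    funext y; ring
  rw [h2]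
  exact integrable_scube_haar_mul _ _ _ _ _

/-- Orthonormality of tensor Haar functions, integral form. -/
lemma integral_tH_mul (ω : ∀ i, GridParam (d i)) (hω : ∀ i, IsGP (ω i)) (p p' : PIdx d)
    (hp : ∀ i, Canc (p.2 i)) (hp' : ∀ i, Canc (p'.2 i)) :
    ∫ x : Pt d, tH ω p x * tH ω p' x = if p = p' then 1 else 0 := by
  have hfub : ∫ x : Pt d, tH ω p x * tH ω p' x
      = ∏ i, ∫ y : Fin (d i) → ℝ,
          (p.1 i).haar (ω i) (p.2 i) y * (p'.1 i).haar (ω i) (p'.2 i) y := by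
    have h1 : (fun x : Pt d => tH ω p x * tH ω p' x)
        = fun x => ∏ i, (fun y => (p.1 i).haar (ω i) (p.2 i) y
            * (p'.1 i).haar (ω i) (p'.2 i) y) (x i) := by
      funext x
      unfold tH
      rw [← Finset.prod_mul_distrib]
    rw [h1]
    exact MeasureTheory.integral_fintype_prod_eq_prod
      (fun i y => (p.1 i).haar (ω i) (p.2 i) y * (p'.1 i).haar (ω i) (p'.2 i) y)
  rw [hfub]
  rw [Finset.prod_congr rfl fun i _ =>
    scube_haar_orth (hω i) (p.1 i) (p'.1 i) (p.2 i) (p'.2 i) (hp i) (hp' i)]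
  split_ifs with h
  · subst h
    simp
  · have hex : ∃ i, ¬(p.1 i = p'.1 i ∧ p.2 i = p'.2 i) := by
      by_contra hall
      push_neg at hall
      exact h (Prod.ext (funext fun i => (hall i).1) (funext fun i => (hall i).2))
    obtain ⟨i, hi⟩ := hex
    exact Finset.prod_eq_zero (Finset.mem_univ i) (if_neg hi)

/-- Finite Bessel inequality for the tensor Haar system. -/
lemma bessel_tH (ω : ∀ i, GridParam (d i)) (hω : ∀ i, IsGP (ω i)) (u : Pt d → ℝ)
    (hu : MemLp u 2 volume) (T : Finset (PIdx d)) (hT : ∀ p ∈ T, ∀ i, Canc (p.2 i)) :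
    ∑ p ∈ T, (Xint ω u p)^2 ≤ ((eLpNorm u 2 volume).toReal)^2 := by
  classical
  set v : {p : PIdx d // ∀ i, Canc (p.2 i)} → (Lp ℝ 2 (volume : Measure (Pt d))) :=
    fun p => (memℒp_tH ω p.1).toLp _ with hv
  have hinner : ∀ (p : {p : PIdx d // ∀ i, Canc (p.2 i)}) (u' : Pt d → ℝ)
      (hu' : MemLp u' 2 volume),
      (inner ℝ (v p) (hu'.toLp u') : ℝ) = ∫ x : Pt d, tH ω p.1 x * u' x := by
    intro p u' hu'
    rw [hv]
    rw [MeasureTheory.L2.inner_def]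
    apply integral_congr_ae
    filter_upwards [(memℒp_tH ω p.1).coeFn_toLp, hu'.coeFn_toLp] with x h1 h2
    rw [RCLike.inner_apply', starRingEnd_apply, star_trivial, h1, h2]
  have horth : Orthonormal ℝ v := by
    rw [orthonormal_iff_ite]
    intro p p'
    have h2 : (inner ℝ (v p) (v p') : ℝ) = ∫ x : Pt d, tH ω p.1 x * tH ω p'.1 x := by
      have hvp' : v p' = (memℒp_tH ω p'.1).toLp (tH ω p'.1) := by rw [hv]
      rw [hvp']
      exact hinner p (tH ω p'.1) (memℒp_tH ω p'.1)
    rw [h2, integral_tH_mul ω hω p.1 p'.1 p.2 p'.2]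
    by_cases h : p = p'
    · rw [if_pos (congrArg Subtype.val h), if_pos h]
    · rw [if_neg fun hc => h (Subtype.ext hc), if_neg h]
  have e1 : ∑ p ∈ Finset.subtype (fun p : PIdx d => ∀ i, Canc (p.2 i)) T,
      (fun p0 : PIdx d => (Xint ω u p0)^2) ↑p = ∑ p ∈ T, (Xint ω u p)^2 :=
    Finset.sum_subtype_of_mem (fun p0 : PIdx d => (Xint ω u p0)^2) hT
  rw [← e1]
  have e2 : ∀ p : {p : PIdx d // ∀ i, Canc (p.2 i)},
      (Xint ω u p.1)^2 = ‖(inner ℝ (v p) (hu.toLp u) : ℝ)‖^2 := by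
    intro p
    rw [hinner p u hu, Real.norm_eq_abs, sq_abs]
    unfold Xint
    congr 1
    exact integral_congr_ae (Filter.Eventually.of_forall fun y => mul_comm _ _)
  calc ∑ p ∈ Finset.subtype (fun p : PIdx d => ∀ i, Canc (p.2 i)) T,
      (fun p0 : PIdx d => (Xint ω u p0)^2) ↑p
      = ∑ p ∈ Finset.subtype (fun p : PIdx d => ∀ i, Canc (p.2 i)) T,
          ‖(inner ℝ (v p) (hu.toLp u) : ℝ)‖^2 := Finset.sum_congr rfl fun p _ => e2 p
    _ ≤ ‖hu.toLp u‖^2 := horth.sum_inner_products_le _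
    _ = ((eLpNorm u 2 volume).toReal)^2 := by rw [MeasureTheory.Lp.norm_toLp]

end TensorHaar
section MainAux

lemma sqrt_prod' {α : Type*} (s : Finset α) (f : α → ℝ) (h : ∀ i ∈ s, 0 ≤ f i) :
    Real.sqrt (∏ i ∈ s, f i) = ∏ i ∈ s, Real.sqrt (f i) := by
  induction s using Finset.cons_induction with
  | empty => simp
  | cons a s ha ih =>
      rw [Finset.prod_cons, Finset.prod_cons,
        Real.sqrt_mul (h a (Finset.mem_cons_self a s)),
        ih fun i hi => h i (Finset.mem_cons_of_mem hi)]

/-- Cardinality bound for the fibers of the projections of the shift sum. -/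
lemma fiber_card_le {n : ℕ} {d : Fin n → ℕ} {Q : Type*} (ω : ∀ i, GridParam (d i))
    (F : Finset Q) (Kf Jf : Q → ∀ i, SCube (d i)) (o : Fin n → ℕ)
    (hscale : ∀ q ∈ F, ∀ i, (Jf q i).s = (Kf q i).s + (o i : ℤ))
    (hsub : ∀ q ∈ F, ∀ i, (Jf q i).set (ω i) ⊆ (Kf q i).set (ω i))
    (hKconst : ∀ q ∈ F, ∀ q' ∈ F, Kf q = Kf q')
    (hinj : ∀ q ∈ F, ∀ q' ∈ F, Jf q = Jf q' → q = q') :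
    (F.card : ℝ) ≤ ∏ i, ((2:ℝ) ^ (o i)) ^ (d i) := by
  classical
  rcases F.eq_empty_or_nonempty with rfl | ⟨q₀, hq₀⟩
  · simp only [Finset.card_empty, Nat.cast_zero]
    positivity
  have hcard : F.card = (F.image Jf).card :=
    (Finset.card_image_of_injOn fun q hq q' hq' h => hinj q hq q' hq' h).symm
  have hsubset : F.image Jf ⊆ Fintype.piFinset (fun i => F.image fun q => Jf q i) := by
    intro Jt hJt
    rw [Finset.mem_image] at hJt
    obtain ⟨q, hq, rfl⟩ := hJt
    rw [Fintype.mem_piFinset]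
    intro i
    exact Finset.mem_image_of_mem _ hq
  have h2 : (F.image Jf).card ≤ ∏ i, (F.image fun q => Jf q i).card := by
    rw [← Fintype.card_piFinset]
    exact Finset.card_le_card hsubset
  have h3 : ∀ i, ((F.image fun q => Jf q i).card : ℝ) ≤ ((2:ℝ) ^ (o i)) ^ (d i) := by
    intro i
    have hmem : ∀ J ∈ F.image fun q => Jf q i, J.s = (Kf q₀ i).s + (o i : ℤ)
        ∧ J.set (ω i) ⊆ (Kf q₀ i).set (ω i) := by
      intro J hJ
      rw [Finset.mem_image] at hJ
      obtain ⟨q, hq, rfl⟩ := hJ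
      constructor
      · rw [hscale q hq i, hKconst q hq q₀ hq₀]
      · have hx := hsub q hq i
        rw [hKconst q hq q₀ hq₀] at hx
        exact hx
    have hcount := card_subcubes (ω := ω i) (Kf q₀ i) ((Kf q₀ i).s + o i) (by omega)
      (F.image fun q => Jf q i) hmem
    have hpos : (0:ℝ) < ((2:ℝ)^(-((Kf q₀ i).s + (o i : ℤ))))^(d i) := by positivity
    have hkey : ((2:ℝ)^(-(Kf q₀ i).s))^(d i)
        = ((2:ℝ)^(o i))^(d i) * ((2:ℝ)^(-((Kf q₀ i).s + (o i : ℤ))))^(d i) := by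
      rw [← mul_pow]
      congr 1
      rw [← zpow_natCast (2:ℝ) (o i), ← zpow_add₀ (by norm_num : (2:ℝ) ≠ 0)]
      congr 1
      ring
    rw [hkey] at hcount
    exact le_of_mul_le_mul_right hcount hpos
  have h2' : ((F.image Jf).card : ℝ) ≤ ∏ i, ((F.image fun q => Jf q i).card : ℝ) := by
    rw [← Nat.cast_prod]
    exact_mod_cast h2
  rw [hcard]
  exact le_trans h2' (Finset.prod_le_prod (fun i _ => Nat.cast_nonneg _) fun i _ => h3 i)

end MainAux
section MainProof

variable {n : ℕ} {d : Fin n → ℕ}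

lemma shift_sum_bound (ω : ∀ i, GridParam (d i)) (hω : ∀ i, IsGP (ω i))
    (ij : Fin n → ℕ × ℕ) (D : ShiftData d)
    (hadm : D.Admissible ω ij) (hcanc : D.Cancellative)
    (f g : Pt d → ℝ) (hf : MemLp f 2 volume) (hg : MemLp g 2 volume)
    (s : Finset (QIdx d)) :
    ∑ q ∈ s, |shiftTerm D ω f g q|
      ≤ (eLpNorm f 2 volume).toReal * (eLpNorm g 2 volume).toReal := by
  classical
  set F2 := (eLpNorm f 2 volume).toReal with hF2
  set G2 := (eLpNorm g 2 volume).toReal with hG2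
  have hF2n : 0 ≤ F2 := ENNReal.toReal_nonneg
  have hG2n : 0 ≤ G2 := ENNReal.toReal_nonneg
  set F' := s.filter (fun q : QIdx d => D.a q.1 q.2.1 q.2.2 ≠ 0) with hF'
  have hsum_eq : ∑ q ∈ F', |shiftTerm D ω f g q| = ∑ q ∈ s, |shiftTerm D ω f g q| := by
    apply Finset.sum_filter_of_ne
    intro q hq hne ha
    apply hne
    unfold shiftTerm
    rw [ha, zero_mul, zero_mul, abs_zero]
  have hFmem : ∀ q ∈ F', D.a q.1 q.2.1 q.2.2 ≠ 0 := fun q hq => (Finset.mem_filter.1 hq).2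
  have hstr := fun (q : QIdx d) (hq : q ∈ F') => hadm.2 q.1 q.2.1 q.2.2 (hFmem q hq)
  set β : Fin n → ℝ := fun i => ((2:ℝ) ^ ((ij i).1)) ^ (d i) with hβ
  set γ : Fin n → ℝ := fun i => ((2:ℝ) ^ ((ij i).2)) ^ (d i) with hγ
  have hβpos : ∀ i, 0 < β i := fun i => by rw [hβ]; positivity
  have hγpos : ∀ i, 0 < γ i := fun i => by rw [hγ]; positivity
  set θ : ℝ := ∏ i, (Real.sqrt (β i * γ i))⁻¹ with hθ
  have hθnn : 0 ≤ θ := Finset.prod_nonneg fun i _ => by positivity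
  -- coefficient bound
  have ha_le : ∀ q ∈ F', |D.a q.1 q.2.1 q.2.2| ≤ θ := by
    intro q hq
    refine le_trans (hadm.1 q.1 q.2.1 q.2.2) (le_of_eq ?_)
    rw [hθ]
    apply Finset.prod_congr rfl
    intro i _
    have hsI := (hstr q hq i).1
    have hsJ := (hstr q hq i).2.1
    unfold SCube.vol
    rw [hsI, hsJ]
    set V : ℝ := ((2:ℝ)^(-(q.1 i).s))^(d i) with hV
    have hVpos : 0 < V := by rw [hV]; positivity
    have hIv : ((2:ℝ)^(-((q.1 i).s + ((ij i).1:ℤ))))^(d i) = V * (β i)⁻¹ := by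
      rw [hV, hβ, ← inv_pow, ← mul_pow]
      congr 1
      rw [← zpow_natCast (2:ℝ) ((ij i).1), ← zpow_neg, ← zpow_add₀ (by norm_num : (2:ℝ) ≠ 0)]
      congr 1
      ring
    have hJv : ((2:ℝ)^(-((q.1 i).s + ((ij i).2:ℤ))))^(d i) = V * (γ i)⁻¹ := by
      rw [hV, hγ, ← inv_pow, ← mul_pow]
      congr 1
      rw [← zpow_natCast (2:ℝ) ((ij i).2), ← zpow_neg, ← zpow_add₀ (by norm_num : (2:ℝ) ≠ 0)]
      congr 1
      ring
    rw [hIv, hJv]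
    rw [show V * (β i)⁻¹ * (V * (γ i)⁻¹) = V^2 * (β i * γ i)⁻¹ by ring]
    rw [Real.sqrt_mul (sq_nonneg _), Real.sqrt_sq hVpos.le, Real.sqrt_inv]
    exact mul_div_cancel_left₀ _ hVpos.ne'
  -- per-term bound
  have htq : ∀ q ∈ F', |shiftTerm D ω f g q|
      ≤ θ * (|Xint ω f (φm D q)| * |Xint ω g (ψm D q)|) := by
    intro q hq
    unfold shiftTerm
    rw [abs_mul, abs_mul, mul_assoc]
    exact mul_le_mul_of_nonneg_right (ha_le q hq)
      (mul_nonneg (abs_nonneg _) (abs_nonneg _))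
  -- Cauchy-Schwarz
  have hCS : ∑ q ∈ F', |Xint ω f (φm D q)| * |Xint ω g (ψm D q)|
      ≤ Real.sqrt (∑ q ∈ F', (Xint ω f (φm D q))^2)
        * Real.sqrt (∑ q ∈ F', (Xint ω g (ψm D q))^2) := by
    have h := Finset.sum_mul_sq_le_sq_mul_sq F' (fun q => |Xint ω f (φm D q)|)
      (fun q => |Xint ω g (ψm D q)|)
    simp only [sq_abs] at h
    have hnn : 0 ≤ ∑ q ∈ F', |Xint ω f (φm D q)| * |Xint ω g (ψm D q)| :=
      Finset.sum_nonneg fun q _ => mul_nonneg (abs_nonneg _) (abs_nonneg _)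
    calc ∑ q ∈ F', |Xint ω f (φm D q)| * |Xint ω g (ψm D q)|
        = Real.sqrt ((∑ q ∈ F', |Xint ω f (φm D q)| * |Xint ω g (ψm D q)|)^2) :=
          (Real.sqrt_sq hnn).symm
      _ ≤ Real.sqrt ((∑ q ∈ F', (Xint ω f (φm D q))^2) * ∑ q ∈ F', (Xint ω g (ψm D q))^2) :=
          Real.sqrt_le_sqrt h
      _ = _ := Real.sqrt_mul (Finset.sum_nonneg fun q _ => sq_nonneg _) _
  -- K is determined by I (resp. J)
  have hKdet : ∀ q ∈ F', ∀ q' ∈ F', q.2.1 = q'.2.1 → q.1 = q'.1 := by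
    intro q hq q' hq' hI
    funext i
    have h1 := hstr q hq i
    have h2 := hstr q' hq' i
    have hIq : q.2.1 i = q'.2.1 i := by rw [hI]
    have hs_eq : (q.1 i).s = (q'.1 i).s := by
      have e1 := h1.1
      have e2 := h2.1
      rw [hIq] at e1
      omega
    by_contra hne
    obtain ⟨x0, hx0⟩ := scube_set_nonempty (q'.2.1 i) (ω i)
    have hm1 : x0 ∈ (q.1 i).set (ω i) := h1.2.2.1 (by rw [hIq]; exact hx0)
    have hm2 : x0 ∈ (q'.1 i).set (ω i) := h2.2.2.1 hx0
    exact Set.disjoint_left.1 (scube_disj_same_scale hs_eq hne) hm1 hm2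
  have hKdet' : ∀ q ∈ F', ∀ q' ∈ F', q.2.2 = q'.2.2 → q.1 = q'.1 := by
    intro q hq q' hq' hJ
    funext i
    have h1 := hstr q hq i
    have h2 := hstr q' hq' i
    have hJq : q.2.2 i = q'.2.2 i := by rw [hJ]
    have hs_eq : (q.1 i).s = (q'.1 i).s := by
      have e1 := h1.2.1
      have e2 := h2.2.1
      rw [hJq] at e1
      omega
    by_contra hne
    obtain ⟨x0, hx0⟩ := scube_set_nonempty (q'.2.2 i) (ω i)
    have hm1 : x0 ∈ (q.1 i).set (ω i) := h1.2.2.2 (by rw [hJq]; exact hx0)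
    have hm2 : x0 ∈ (q'.1 i).set (ω i) := h2.2.2.2 hx0
    exact Set.disjoint_left.1 (scube_disj_same_scale hs_eq hne) hm1 hm2
  -- the two square-sum bounds
  have hXsum : ∑ q ∈ F', (Xint ω f (φm D q))^2 ≤ (∏ i, γ i) * F2^2 := by
    rw [← Finset.sum_fiberwise_of_maps_to
      (fun q hq => Finset.mem_image_of_mem (φm D) hq) (fun q => (Xint ω f (φm D q))^2)]
    have hfib : ∀ p ∈ F'.image (φm D),
        ∑ q ∈ F'.filter (fun q => φm D q = p), (Xint ω f (φm D q))^2
          ≤ (∏ i, γ i) * (Xint ω f p)^2 := by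
      intro p hp
      have hconst : ∀ q ∈ F'.filter (fun q => φm D q = p),
          (Xint ω f (φm D q))^2 = (Xint ω f p)^2 := by
        intro q hq
        rw [(Finset.mem_filter.1 hq).2]
      rw [Finset.sum_congr rfl hconst, Finset.sum_const, nsmul_eq_mul]
      refine mul_le_mul_of_nonneg_right ?_ (sq_nonneg _)
      set fib := F'.filter (fun q => φm D q = p) with hfib'
      have hfibF : ∀ q ∈ fib, q ∈ F' := fun q hq => (Finset.mem_filter.1 hq).1
      have hIeq : ∀ q ∈ fib, q.2.1 = p.1 :=
        fun q hq => congrArg Prod.fst (Finset.mem_filter.1 hq).2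
      have hinjq : ∀ q ∈ fib, ∀ q' ∈ fib,
          (fun q : QIdx d => q.2.2) q = (fun q : QIdx d => q.2.2) q' → q = q' := by
        intro q hq q' hq' hJ
        have e1 : q.1 = q'.1 := hKdet q (hfibF q hq) q' (hfibF q' hq')
          (by rw [hIeq q hq, hIeq q' hq'])
        have e2 : q.2.1 = q'.2.1 := by rw [hIeq q hq, hIeq q' hq']
        exact Prod.ext e1 (Prod.ext e2 hJ)
      have hbound := fiber_card_le ω fib (fun q => q.1) (fun q => q.2.2) (fun i => (ij i).2)
        (fun q hq i => (hstr q (hfibF q hq) i).2.1)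
        (fun q hq i => (hstr q (hfibF q hq) i).2.2.2)
        (fun q hq q' hq' => hKdet q (hfibF q hq) q' (hfibF q' hq')
          (by rw [hIeq q hq, hIeq q' hq']))
        hinjq
      rw [hγ]
      exact hbound
    calc ∑ p ∈ F'.image (φm D), ∑ q ∈ F'.filter (fun q => φm D q = p), (Xint ω f (φm D q))^2
        ≤ ∑ p ∈ F'.image (φm D), (∏ i, γ i) * (Xint ω f p)^2 := Finset.sum_le_sum hfib
      _ = (∏ i, γ i) * ∑ p ∈ F'.image (φm D), (Xint ω f p)^2 := by rw [Finset.mul_sum]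
      _ ≤ (∏ i, γ i) * F2^2 := by
          refine mul_le_mul_of_nonneg_left ?_ (Finset.prod_nonneg fun i _ => (hγpos i).le)
          have hT : ∀ p ∈ F'.image (φm D), ∀ i, Canc (p.2 i) := by
            intro p hp i
            rw [Finset.mem_image] at hp
            obtain ⟨q, hq, rfl⟩ := hp
            exact (hcanc q.1 q.2.1 q.2.2 (hFmem q hq)).1 i
          exact bessel_tH ω hω f hf _ hT
  have hYsum : ∑ q ∈ F', (Xint ω g (ψm D q))^2 ≤ (∏ i, β i) * G2^2 := by
    rw [← Finset.sum_fiberwise_of_maps_to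
      (fun q hq => Finset.mem_image_of_mem (ψm D) hq) (fun q => (Xint ω g (ψm D q))^2)]
    have hfib : ∀ p ∈ F'.image (ψm D),
        ∑ q ∈ F'.filter (fun q => ψm D q = p), (Xint ω g (ψm D q))^2
          ≤ (∏ i, β i) * (Xint ω g p)^2 := by
      intro p hp
      have hconst : ∀ q ∈ F'.filter (fun q => ψm D q = p),
          (Xint ω g (ψm D q))^2 = (Xint ω g p)^2 := by
        intro q hq
        rw [(Finset.mem_filter.1 hq).2]
      rw [Finset.sum_congr rfl hconst, Finset.sum_const, nsmul_eq_mul]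
      refine mul_le_mul_of_nonneg_right ?_ (sq_nonneg _)
      set fib := F'.filter (fun q => ψm D q = p) with hfib'
      have hfibF : ∀ q ∈ fib, q ∈ F' := fun q hq => (Finset.mem_filter.1 hq).1
      have hJeq : ∀ q ∈ fib, q.2.2 = p.1 :=
        fun q hq => congrArg Prod.fst (Finset.mem_filter.1 hq).2
      have hinjq : ∀ q ∈ fib, ∀ q' ∈ fib,
          (fun q : QIdx d => q.2.1) q = (fun q : QIdx d => q.2.1) q' → q = q' := by
        intro q hq q' hq' hI
        have e1 : q.1 = q'.1 := hKdet' q (hfibF q hq) q' (hfibF q' hq')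
          (by rw [hJeq q hq, hJeq q' hq'])
        have e3 : q.2.2 = q'.2.2 := by rw [hJeq q hq, hJeq q' hq']
        exact Prod.ext e1 (Prod.ext hI e3)
      have hbound := fiber_card_le ω fib (fun q => q.1) (fun q => q.2.1) (fun i => (ij i).1)
        (fun q hq i => (hstr q (hfibF q hq) i).1)
        (fun q hq i => (hstr q (hfibF q hq) i).2.2.1)
        (fun q hq q' hq' => hKdet' q (hfibF q hq) q' (hfibF q' hq')
          (by rw [hJeq q hq, hJeq q' hq']))
        hinjq
      rw [hβ]
      exact hbound
    calc ∑ p ∈ F'.image (ψm D), ∑ q ∈ F'.filter (fun q => ψm D q = p), (Xint ω g (ψm D q))^2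
        ≤ ∑ p ∈ F'.image (ψm D), (∏ i, β i) * (Xint ω g p)^2 := Finset.sum_le_sum hfib
      _ = (∏ i, β i) * ∑ p ∈ F'.image (ψm D), (Xint ω g p)^2 := by rw [Finset.mul_sum]
      _ ≤ (∏ i, β i) * G2^2 := by
          refine mul_le_mul_of_nonneg_left ?_ (Finset.prod_nonneg fun i _ => (hβpos i).le)
          have hT : ∀ p ∈ F'.image (ψm D), ∀ i, Canc (p.2 i) := by
            intro p hp i
            rw [Finset.mem_image] at hp
            obtain ⟨q, hq, rfl⟩ := hp
            exact (hcanc q.1 q.2.1 q.2.2 (hFmem q hq)).2 i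
          exact bessel_tH ω hω g hg _ hT
  -- assemble
  have hγnn : (0:ℝ) ≤ ∏ i, γ i := Finset.prod_nonneg fun i _ => (hγpos i).le
  have hβnn : (0:ℝ) ≤ ∏ i, β i := Finset.prod_nonneg fun i _ => (hβpos i).le
  have hone : θ * (Real.sqrt (∏ i, γ i) * Real.sqrt (∏ i, β i)) = 1 := by
    rw [hθ, sqrt_prod' _ _ (fun i _ => (hγpos i).le), sqrt_prod' _ _ (fun i _ => (hβpos i).le),
      ← Finset.prod_mul_distrib, ← Finset.prod_mul_distrib]
    apply Finset.prod_eq_one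
    intro i _
    rw [Real.sqrt_mul (hβpos i).le]
    have h1 : Real.sqrt (β i) ≠ 0 := by positivity
    have h2 : Real.sqrt (γ i) ≠ 0 := by positivity
    field_simp
  calc ∑ q ∈ s, |shiftTerm D ω f g q| = ∑ q ∈ F', |shiftTerm D ω f g q| := hsum_eq.symm
    _ ≤ ∑ q ∈ F', θ * (|Xint ω f (φm D q)| * |Xint ω g (ψm D q)|) := Finset.sum_le_sum htq
    _ = θ * ∑ q ∈ F', |Xint ω f (φm D q)| * |Xint ω g (ψm D q)| := by rw [Finset.mul_sum]
    _ ≤ θ * (Real.sqrt (∑ q ∈ F', (Xint ω f (φm D q))^2)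
          * Real.sqrt (∑ q ∈ F', (Xint ω g (ψm D q))^2)) := mul_le_mul_of_nonneg_left hCS hθnn
    _ ≤ θ * (Real.sqrt ((∏ i, γ i) * F2^2) * Real.sqrt ((∏ i, β i) * G2^2)) := by
        refine mul_le_mul_of_nonneg_left ?_ hθnn
        exact mul_le_mul (Real.sqrt_le_sqrt hXsum) (Real.sqrt_le_sqrt hYsum)
          (Real.sqrt_nonneg _) (Real.sqrt_nonneg _)
    _ = (θ * (Real.sqrt (∏ i, γ i) * Real.sqrt (∏ i, β i))) * (F2 * G2) := by
        rw [Real.sqrt_mul hγnn, Real.sqrt_mul hβnn, Real.sqrt_sq hF2n, Real.sqrt_sq hG2n]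
        ring
    _ = F2 * G2 := by rw [hone, one_mul]

end MainProof

/-- **`L²` boundedness of cancellative dyadic shifts.** If an `n`-parameter dyadic
shift is cancellative (all Haar functions appearing in its defining sum are
cancellative) and its coefficients satisfy
`|a_{I₁J₁K₁…IₙJₙKₙ}| ≤ √(|I₁||J₁|⋯|Iₙ||Jₙ|)/(|K₁|⋯|Kₙ|)` (together with the structural
constraints `I_s, J_s ⊆ K_s`, `ℓ(I_s) = 2^{-i_s} ℓ(K_s)`, `ℓ(J_s) = 2^{-j_s} ℓ(K_s)`),
then it is bounded on `L²(ℝ^{d⃗})` with norm `≲ 1` (a constant independent of the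
shift, of its parameters, and of the grids). -/
theorem cancellative_shift_L2_bounded {n : ℕ} (d : Fin n → ℕ) :
    ∃ C : ℝ, 0 ≤ C ∧
      ∀ (ω : ∀ i : Fin n, GridParam (d i)), (∀ i, IsGP (ω i)) →
      ∀ (ij : Fin n → ℕ × ℕ) (D : ShiftData d),
        D.Admissible ω ij → D.Cancellative →
        ∀ f g : Pt d → ℝ, MemLp f 2 volume → MemLp g 2 volume →
          |D.pairing ω f g|
            ≤ C * (eLpNorm f 2 volume).toReal * (eLpNorm g 2 volume).toReal := by
  refine ⟨1, zero_le_one, ?_⟩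
  intro ω hω ij D hadm hcanc f g hf hg
  rw [pairing_eq]
  have key := shift_sum_bound ω hω ij D hadm hcanc f g hf hg
  by_cases hsum : Summable (shiftTerm D ω f g)
  · have habs : Summable fun q => |shiftTerm D ω f g q| := hsum.abs
    have h1 : |∑' q, shiftTerm D ω f g q| ≤ ∑' q, |shiftTerm D ω f g q| := by
      have h0 := norm_tsum_le_tsum_norm (f := shiftTerm D ω f g)
        (by simpa [Real.norm_eq_abs] using habs)
      simpa [Real.norm_eq_abs] using h0
    have h2 := Summable.tsum_le_of_sum_le habs key
    calc |∑' q, shiftTerm D ω f g q| ≤ ∑' q, |shiftTerm D ω f g q| := h1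
      _ ≤ (eLpNorm f 2 volume).toReal * (eLpNorm g 2 volume).toReal := h2
      _ = 1 * (eLpNorm f 2 volume).toReal * (eLpNorm g 2 volume).toReal := by ring
  · rw [tsum_eq_zero_of_not_summable hsum, abs_zero, one_mul]
    exact mul_nonneg ENNReal.toReal_nonneg ENNReal.toReal_nonneg

end MPSIO
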